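/- Let f be a convex, separately increasing function of n variables on a cube, and let (x₁,...,xₙ) and (y₁,...,yₙ) be abelian n-tuples of self-adjoint operators on a finite-dimensional Hilbert space in the domain of f with xᵢ ≤ yᵢ for each i. Then f(x₁,...,xₙ) ≺_w f(y₁,...,yₙ). -/

import Mathlib

open Matrix
open scoped ComplexOrder Classical

/-- The values of a tuple of reals rearranged in decreasing order. -/
noncomputable def sortedDesc {m : ℕ} (a : Fin m → ℝ) : Fin m → ℝ :=
  fun i => (a ∘ Tuple.sort a) i.rev

section Aux
open Polynomial

lemma charpoly_unitary_conj {m : ℕ} {W : Matrix (Fin m) (Fin m) ℂ}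
    (hW : W ∈ Matrix.unitaryGroup (Fin m) ℂ) (A : Matrix (Fin m) (Fin m) ℂ) :
    (W * A * star W).charpoly = A.charpoly := by
  have h1 : W * star W = 1 := Matrix.mem_unitaryGroup_iff.mp hW
  have hone : (W.map C) * ((star W).map C) = 1 := by
    rw [← Matrix.map_mul, h1, Matrix.map_one _ (map_zero _) (map_one _)]
  have key : charmatrix (W * A * star W)
      = W.map C * charmatrix A * (star W).map C := by
    unfold charmatrix
    rw [RingHom.mapMatrix_apply, RingHom.mapMatrix_apply, Matrix.mul_sub, Matrix.sub_mul]
    congr 1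
    · rw [← (Matrix.scalar_commute (X : ℂ[X]) (fun r => Commute.all _ _) (W.map C)).eq,
        Matrix.mul_assoc, hone, Matrix.mul_one]
    · rw [← Matrix.map_mul, ← Matrix.map_mul]
  rw [Matrix.charpoly, Matrix.charpoly, key, Matrix.det_mul, Matrix.det_mul]
  have h2 : (W.map C).det * ((star W).map C).det = 1 := by
    rw [← Matrix.det_mul, hone, Matrix.det_one]
  calc (W.map C).det * (charmatrix A).det * ((star W).map C).det
      = (W.map C).det * ((star W).map C).det * (charmatrix A).det := by ring
    _ = (charmatrix A).det := by rw [h2, one_mul]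

lemma charpoly_diagonal' {m : ℕ} (d : Fin m → ℂ) :
    (Matrix.diagonal d).charpoly = ∏ i, (X - C (d i)) := by
  rw [Matrix.charpoly]
  have h : charmatrix (Matrix.diagonal d) = Matrix.diagonal (fun i => (X : ℂ[X]) - C (d i)) := by
    ext i j
    rcases eq_or_ne i j with rfl | h
    · simp [charmatrix_apply_eq]
    · simp [charmatrix_apply_ne _ _ _ h, Matrix.diagonal_apply_ne _ h]
  rw [h, Matrix.det_diagonal]

lemma roots_charpoly_diagonal {m : ℕ} (d : Fin m → ℂ) :
    (Matrix.diagonal d).charpoly.roots = Finset.univ.val.map d := by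
  rw [charpoly_diagonal']
  have h : ∏ i, (X - C (d i)) = ((Finset.univ.val.map d).map (fun a => X - C a)).prod := by
    rw [Multiset.map_map]; rfl
  rw [h, roots_multiset_prod_X_sub_C]

lemma multiset_eq_of_unitary_conj {m : ℕ} {W : Matrix (Fin m) (Fin m) ℂ}
    (hW : W ∈ Matrix.unitaryGroup (Fin m) ℂ) {a b : Fin m → ℝ}
    (h : W * Matrix.diagonal (fun j => (a j : ℂ)) * star W
        = Matrix.diagonal (fun j => (b j : ℂ))) :
    Finset.univ.val.map a = Finset.univ.val.map b := by
  have h1 := congrArg Matrix.charpoly h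
  rw [charpoly_unitary_conj hW] at h1
  have h2 := congrArg Polynomial.roots h1
  rw [roots_charpoly_diagonal, roots_charpoly_diagonal] at h2
  have h3 : Multiset.map Complex.ofReal (Finset.univ.val.map a)
      = Multiset.map Complex.ofReal (Finset.univ.val.map b) := by
    simpa [Multiset.map_map, Function.comp_def] using h2
  exact Multiset.map_injective Complex.ofReal_injective h3

lemma multiset_map_ofFn {m : ℕ} (g : Fin m → ℝ) :
    (↑(List.ofFn g) : Multiset ℝ) = Finset.univ.val.map g := by
  rw [List.ofFn_eq_map, ← Multiset.map_coe]
  rfl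

lemma multiset_map_perm {m : ℕ} (g : Fin m → ℝ) (σ : Equiv.Perm (Fin m)) :
    Finset.univ.val.map (g ∘ σ) = Finset.univ.val.map g := by
  have : Finset.univ.val.map (g ∘ σ) = (Finset.univ.val.map (σ : Fin m → Fin m)).map g := by
    rw [Multiset.map_map]
  rw [this]
  congr 1
  have := Finset.map_univ_equiv σ
  calc Finset.univ.val.map (σ : Fin m → Fin m)
      = (Finset.univ.map σ.toEmbedding).val := by rw [Finset.map_val]; rfl
    _ = Finset.univ.val := by rw [Finset.map_univ_equiv]

lemma sortedDesc_eq_of_multiset_eq {m : ℕ} {a b : Fin m → ℝ}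
    (h : Finset.univ.val.map a = Finset.univ.val.map b) : sortedDesc a = sortedDesc b := by
  have key : List.ofFn (a ∘ Tuple.sort a) = List.ofFn (b ∘ Tuple.sort b) := by
    apply List.Perm.eq_of_sortedLE ((Tuple.monotone_sort a).sortedLE_ofFn)
      ((Tuple.monotone_sort b).sortedLE_ofFn) ?_
    rw [← Multiset.coe_eq_coe, multiset_map_ofFn, multiset_map_ofFn,
      multiset_map_perm, multiset_map_perm, h]
  have heq : a ∘ Tuple.sort a = b ∘ Tuple.sort b := List.ofFn_injective key
  funext i
  show (a ∘ Tuple.sort a) i.rev = (b ∘ Tuple.sort b) i.rev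
  rw [heq]

/-- The eigenvalues of a Hermitian matrix in decreasing order (junk `0` otherwise). -/
noncomputable def eigDesc {m : ℕ} (A : Matrix (Fin m) (Fin m) ℂ) : Fin m → ℝ :=
  if h : A.IsHermitian then sortedDesc h.eigenvalues else 0

lemma isHermitian_conj_diag {m : ℕ} {W : Matrix (Fin m) (Fin m) ℂ} (a : Fin m → ℝ) :
    (W * Matrix.diagonal (fun j => (a j : ℂ)) * star W).IsHermitian := by
  have hd : (Matrix.diagonal (fun j => (a j : ℂ))).IsHermitian :=
    Matrix.isHermitian_diagonal_of_self_adjoint _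
      (funext fun j => Complex.conj_ofReal (a j))
  simpa [Matrix.mul_assoc, Matrix.star_eq_conjTranspose] using Matrix.isHermitian_mul_mul_conjTranspose W hd

lemma eigDesc_unitary_conj {m : ℕ} {W : Matrix (Fin m) (Fin m) ℂ}
    (hW : W ∈ Matrix.unitaryGroup (Fin m) ℂ) (a : Fin m → ℝ) :
    eigDesc (W * Matrix.diagonal (fun j => (a j : ℂ)) * star W) = sortedDesc a := by
  set A := W * Matrix.diagonal (fun j => (a j : ℂ)) * star W with hA
  have hherm : A.IsHermitian := isHermitian_conj_diag a
  rw [eigDesc, dif_pos hherm]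
  apply sortedDesc_eq_of_multiset_eq
  -- spectral theorem
  set P := (Matrix.IsHermitian.eigenvectorUnitary hherm : Matrix (Fin m) (Fin m) ℂ) with hP
  have hPU : P ∈ Matrix.unitaryGroup (Fin m) ℂ := (Matrix.IsHermitian.eigenvectorUnitary hherm).2
  have hspec : A = P * Matrix.diagonal (fun j => ((hherm.eigenvalues j : ℝ) : ℂ)) * star P := by
    exact hherm.spectral_theorem
  -- (star P * W) * diag a * star (star P * W) = diag eigenvalues
  have hconj : (star P * W) * Matrix.diagonal (fun j => (a j : ℂ)) * star (star P * W)
      = Matrix.diagonal (fun j => ((hherm.eigenvalues j : ℝ) : ℂ)) := by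
    have h1 : star P * P = 1 := Matrix.mem_unitaryGroup_iff'.mp hPU
    have h2 : P * star P = 1 := Matrix.mem_unitaryGroup_iff.mp hPU
    have := hspec.symm
    calc (star P * W) * Matrix.diagonal (fun j => (a j : ℂ)) * star (star P * W)
        = star P * A * P := by
          rw [hA]; simp only [StarMul.star_mul, star_star, Matrix.mul_assoc]
      _ = star P * (P * Matrix.diagonal (fun j => ((hherm.eigenvalues j : ℝ) : ℂ)) * star P) * P := by
          rw [← hspec]
      _ = Matrix.diagonal (fun j => ((hherm.eigenvalues j : ℝ) : ℂ)) := by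
          simp only [Matrix.mul_assoc, h1, Matrix.mul_one]
          rw [← Matrix.mul_assoc, h1, Matrix.one_mul]
  have hmem : star P * W ∈ Matrix.unitaryGroup (Fin m) ℂ :=
    mul_mem (Unitary.star_mem hPU) hW
  exact (multiset_eq_of_unitary_conj hmem hconj).symm

lemma card_filter_lt {m k : ℕ} (hk : k ≤ m) :
    (Finset.univ.filter (fun i : Fin m => (i : ℕ) < k)).card = k := by
  apply Finset.card_eq_of_bijective (fun i hi => (⟨i, lt_of_lt_of_le hi hk⟩ : Fin m))
  · intro a ha
    have : (a : ℕ) < k := (Finset.mem_filter.mp ha).2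
    exact ⟨a, this, Fin.ext rfl⟩
  · intro i hi
    simp [hi]
  · intro i j hi hj hij
    simpa using congrArg Fin.val hij

lemma sortedDesc_antitone {m : ℕ} (b : Fin m → ℝ) : Antitone (sortedDesc b) := by
  intro i j hij
  exact Tuple.monotone_sort b (by simpa using Fin.rev_le_rev.mpr hij)

lemma sum_comp_sortedDesc {m : ℕ} (b : Fin m → ℝ) (F : ℝ → ℝ) :
    ∑ i, F (sortedDesc b i) = ∑ i, F (b i) := by
  exact Equiv.sum_comp (Fin.revPerm.trans (Tuple.sort b)) (fun j => F (b j))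

lemma sum_weighted_le_topk {m k : ℕ} (hk : k ≤ m) (b d : Fin m → ℝ)
    (hd0 : ∀ l, 0 ≤ d l) (hd1 : ∀ l, d l ≤ 1) (hsum : ∑ l, d l = (k : ℝ)) :
    ∑ l, d l * b l ≤
      ∑ i ∈ Finset.univ.filter (fun i : Fin m => (i : ℕ) < k), sortedDesc b i := by
  rcases Nat.eq_zero_or_pos k with rfl | hkpos
  · have hz : ∀ l ∈ Finset.univ, d l = 0 :=
      (Finset.sum_eq_zero_iff_of_nonneg (fun i _ => hd0 i)).mp (by simpa using hsum)
    have : ∀ l : Fin m, d l * b l = 0 := fun l => by rw [hz l (Finset.mem_univ l), zero_mul]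
    simp [this]
  · have hkm : k - 1 < m := by omega
    set t := sortedDesc b ⟨k - 1, hkm⟩ with ht
    have hcard := card_filter_lt (m := m) hk
    have step1 : ∀ l, d l * b l ≤ max (b l - t) 0 + d l * t := by
      intro l
      rcases le_total t (b l) with h | h
      · have h1 : d l * b l - d l * t ≤ b l - t := by nlinarith [hd0 l, hd1 l]
        have hmax : max (b l - t) 0 = b l - t := max_eq_left (by linarith)
        linarith
      · have h1 : d l * b l ≤ d l * t := by nlinarith [hd0 l]
        have h2 : (0:ℝ) ≤ max (b l - t) 0 := le_max_right _ _
        linarith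
    have hsplit : ∑ i : Fin m, max (sortedDesc b i - t) 0
        = ∑ i ∈ Finset.univ.filter (fun i : Fin m => (i : ℕ) < k), (sortedDesc b i - t) := by
      rw [← Finset.sum_filter_add_sum_filter_not Finset.univ (fun i : Fin m => (i : ℕ) < k)]
      have hz : ∀ i ∈ Finset.univ.filter (fun i : Fin m => ¬ (i : ℕ) < k),
          max (sortedDesc b i - t) 0 = 0 := by
        intro i hi
        have hik : ¬ (i : ℕ) < k := (Finset.mem_filter.mp hi).2
        have : sortedDesc b i ≤ t :=
          sortedDesc_antitone b (by simp only [Fin.le_def]; omega :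
            (⟨k - 1, hkm⟩ : Fin m) ≤ i)
        simp [max_eq_right, sub_nonpos.mpr this]
      rw [Finset.sum_eq_zero hz, add_zero]
      apply Finset.sum_congr rfl
      intro i hi
      have hik : (i : ℕ) < k := (Finset.mem_filter.mp hi).2
      have : t ≤ sortedDesc b i :=
        sortedDesc_antitone b (by simp only [Fin.le_def]; omega :
          i ≤ (⟨k - 1, hkm⟩ : Fin m))
      exact max_eq_left (by linarith)
    calc ∑ l, d l * b l ≤ ∑ l, (max (b l - t) 0 + d l * t) :=
          Finset.sum_le_sum fun l _ => step1 l
      _ = ∑ l, max (b l - t) 0 + (k : ℝ) * t := by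
          rw [Finset.sum_add_distrib, ← Finset.sum_mul, hsum]
      _ = ∑ i : Fin m, max (sortedDesc b i - t) 0 + (k : ℝ) * t := by
          rw [sum_comp_sortedDesc b (fun z => max (z - t) 0)]
      _ = ∑ i ∈ Finset.univ.filter (fun i : Fin m => (i : ℕ) < k), (sortedDesc b i - t)
            + (k : ℝ) * t := by rw [hsplit]
      _ = ∑ i ∈ Finset.univ.filter (fun i : Fin m => (i : ℕ) < k), sortedDesc b i := by
          rw [Finset.sum_sub_distrib, Finset.sum_const, hcard]
          ring

/-- Weak majorization `A ≺_w B` of Hermitian matrices: all partial sums of decreasingly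
ordered eigenvalues of `A` are dominated by those of `B`. -/
def WeakMaj {m : ℕ} (A B : Matrix (Fin m) (Fin m) ℂ) : Prop :=
  ∀ k : ℕ, k ≤ m →
    ∑ i ∈ Finset.univ.filter (fun i : Fin m => (i : ℕ) < k), eigDesc A i ≤
      ∑ i ∈ Finset.univ.filter (fun i : Fin m => (i : ℕ) < k), eigDesc B i

lemma dot_eq_entry {m : ℕ} (M Umat : Matrix (Fin m) (Fin m) ℂ) (j : Fin m) :
    dotProduct (star fun p => Umat p j) (M *ᵥ fun p => Umat p j)
      = (star Umat * M * Umat) j j := by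
  simp only [dotProduct, Matrix.mulVec, Matrix.mul_apply, Matrix.conjTranspose_apply,
    Matrix.star_apply, Pi.star_apply, Finset.sum_mul, Finset.mul_sum]
  rw [Finset.sum_comm]
  apply Finset.sum_congr rfl; intro p _
  apply Finset.sum_congr rfl; intro q _
  ring

end Aux

/-- If `f` is convex and separately increasing on a cube, and `(x₁,…,xₙ)`, `(y₁,…,yₙ)` are
abelian `n`-tuples of self-adjoint matrices in the domain of `f` with `xᵢ ≤ yᵢ`
(Loewner order) for each `i`, then `f(x₁,…,xₙ) ≺_w f(y₁,…,yₙ)`. -/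
theorem weakMaj_monotone (n m : ℕ)
    (I : Fin n → Set ℝ) (hI : ∀ i, (I i).OrdConnected)
    (f : (Fin n → ℝ) → ℝ) (hf : ConvexOn ℝ (Set.univ.pi I) f)
    (hmono : ∀ v w, v ∈ Set.univ.pi I → w ∈ Set.univ.pi I →
      (∀ i, v i ≤ w i) → f v ≤ f w)
    (x y : Fin n → Matrix (Fin m) (Fin m) ℂ)
    (hle : ∀ i, (y i - x i).PosSemidef)
    (U : Matrix (Fin m) (Fin m) ℂ) (hU : U ∈ Matrix.unitaryGroup (Fin m) ℂ)
    (lam : Fin n → Fin m → ℝ)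
    (hx : ∀ i, x i = U * Matrix.diagonal (fun j => (lam i j : ℂ)) * star U)
    (hspecx : ∀ j, (fun i => lam i j) ∈ Set.univ.pi I)
    (fx : Matrix (Fin m) (Fin m) ℂ)
    (hfx : fx = U * Matrix.diagonal (fun j => (f (fun i => lam i j) : ℂ)) * star U)
    (V : Matrix (Fin m) (Fin m) ℂ) (hV : V ∈ Matrix.unitaryGroup (Fin m) ℂ)
    (mu : Fin n → Fin m → ℝ)
    (hy : ∀ i, y i = V * Matrix.diagonal (fun j => (mu i j : ℂ)) * star V)
    (hspecy : ∀ j, (fun i => mu i j) ∈ Set.univ.pi I)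
    (fy : Matrix (Fin m) (Fin m) ℂ)
    (hfy : fy = V * Matrix.diagonal (fun j => (f (fun i => mu i j) : ℂ)) * star V) :
    WeakMaj fx fy := by
  classical
  have hfxe : eigDesc fx = sortedDesc (fun j => f fun i => lam i j) := by
    rw [hfx]; exact eigDesc_unitary_conj hU _
  have hfye : eigDesc fy = sortedDesc (fun j => f fun i => mu i j) := by
    rw [hfy]; exact eigDesc_unitary_conj hV _
  have hU1 : star U * U = 1 := Matrix.mem_unitaryGroup_iff'.mp hU
  have hU2 : U * star U = 1 := Matrix.mem_unitaryGroup_iff.mp hU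
  have hV1 : star V * V = 1 := Matrix.mem_unitaryGroup_iff'.mp hV
  have hV2 : V * star V = 1 := Matrix.mem_unitaryGroup_iff.mp hV
  set Wm : Matrix (Fin m) (Fin m) ℂ := star V * U with hWm
  have hsW : star Wm = star U * V := by rw [hWm, StarMul.star_mul, star_star]
  have hW1 : star Wm * Wm = 1 := by
    rw [hsW, hWm]
    calc star U * V * (star V * U) = star U * (V * star V * U) := by
          simp only [Matrix.mul_assoc]
      _ = 1 := by rw [hV2, Matrix.one_mul, hU1]
  have hW2 : Wm * star Wm = 1 := by
    rw [hsW, hWm]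
    calc star V * U * (star U * V) = star V * (U * star U * V) := by
          simp only [Matrix.mul_assoc]
      _ = 1 := by rw [hU2, Matrix.one_mul, hV1]
  set c : Fin m → Fin m → ℝ := fun j l => Complex.normSq (Wm l j) with hc
  have hc0 : ∀ j l, 0 ≤ c j l := fun j l => Complex.normSq_nonneg _
  have hrow : ∀ j, ∑ l, c j l = 1 := by
    intro j
    have h1 : (star Wm * Wm) j j = 1 := by rw [hW1]; simp [Matrix.one_apply]
    rw [Matrix.mul_apply] at h1
    have h2 : ∀ l, (star Wm) j l * Wm l j = ((c j l : ℝ) : ℂ) := by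
      intro l
      rw [Matrix.star_apply, Complex.star_def, mul_comm, Complex.mul_conj]
    rw [Finset.sum_congr rfl (fun l _ => h2 l)] at h1
    exact_mod_cast h1
  have hcol : ∀ l, ∑ j, c j l = 1 := by
    intro l
    have h1 : (Wm * star Wm) l l = 1 := by rw [hW2]; simp [Matrix.one_apply]
    rw [Matrix.mul_apply] at h1
    have h2 : ∀ j, Wm l j * (star Wm) j l = ((c j l : ℝ) : ℂ) := by
      intro j
      rw [Matrix.star_apply, Complex.star_def, Complex.mul_conj]
    rw [Finset.sum_congr rfl (fun j _ => h2 j)] at h1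
    exact_mod_cast h1
  have hxd : ∀ i, star U * x i * U = Matrix.diagonal (fun j => (lam i j : ℂ)) := by
    intro i
    rw [hx i]
    simp only [Matrix.mul_assoc, hU1, Matrix.mul_one]
    rw [← Matrix.mul_assoc, hU1, Matrix.one_mul]
  have hyd : ∀ i, star U * y i * U
      = star Wm * Matrix.diagonal (fun j => (mu i j : ℂ)) * Wm := by
    intro i
    rw [hy i, hsW, hWm]
    simp only [Matrix.mul_assoc]
  have hyentry : ∀ i j, (star Wm * Matrix.diagonal (fun j' => (mu i j' : ℂ)) * Wm) j j
      = ((∑ l, c j l * mu i l : ℝ) : ℂ) := by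
    intro i j
    rw [Matrix.mul_apply]
    have h2 : ∀ l, (star Wm * Matrix.diagonal (fun j' => (mu i j' : ℂ))) j l * Wm l j
        = ((c j l * mu i l : ℝ) : ℂ) := by
      intro l
      rw [Matrix.mul_diagonal, Matrix.star_apply, Complex.star_def]
      calc (starRingEnd ℂ) (Wm l j) * (mu i l : ℂ) * Wm l j
          = (mu i l : ℂ) * (Wm l j * (starRingEnd ℂ) (Wm l j)) := by ring
        _ = (mu i l : ℂ) * ((Complex.normSq (Wm l j) : ℝ) : ℂ) := by rw [Complex.mul_conj]
        _ = ((c j l * mu i l : ℝ) : ℂ) := by simp only [hc]; push_cast; ring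
    rw [Finset.sum_congr rfl (fun l _ => h2 l)]
    push_cast
    ring_nf
  have key : ∀ i j, lam i j ≤ ∑ l, c j l * mu i l := by
    intro i j
    have hpsd := (hle i).dotProduct_mulVec_nonneg (fun p => U p j)
    rw [dot_eq_entry] at hpsd
    have hsub : star U * (y i - x i) * U = star U * y i * U - star U * x i * U := by
      rw [Matrix.mul_sub, Matrix.sub_mul]
    rw [hsub] at hpsd
    have hent : (star U * y i * U - star U * x i * U) j j
        = (((∑ l, c j l * mu i l) - lam i j : ℝ) : ℂ) := by
      rw [Matrix.sub_apply, hyd i, hxd i, hyentry i j, Matrix.diagonal_apply_eq]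
      push_cast
      ring
    rw [hent] at hpsd
    have := Complex.zero_le_real.mp hpsd
    linarith
  -- convexity step
  have hconv : Convex ℝ (Set.univ.pi I) := convex_pi (fun i _ => (hI i).convex)
  have perj : ∀ j, f (fun i => lam i j) ≤ ∑ l, c j l * f (fun i => mu i l) := by
    intro j
    have hp_eq : (fun i => ∑ l, c j l * mu i l)
        = ∑ l ∈ Finset.univ, c j l • (fun i => mu i l) := by
      funext i
      rw [Finset.sum_apply]
      simp [smul_eq_mul]
    have hpmem : (fun i => ∑ l, c j l * mu i l) ∈ Set.univ.pi I := by
      rw [hp_eq]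
      exact hconv.sum_mem (fun l _ => hc0 j l) (hrow j) (fun l _ => hspecy l)
    have h1 : f (fun i => lam i j) ≤ f (fun i => ∑ l, c j l * mu i l) :=
      hmono _ _ (hspecx j) hpmem (fun i => key i j)
    have h2 : f (fun i => ∑ l, c j l * mu i l) ≤ ∑ l, c j l * f (fun i => mu i l) := by
      have := hf.map_sum_le (fun l (_ : l ∈ Finset.univ) => hc0 j l) (hrow j)
        (fun l _ => hspecy l)
      rw [hp_eq]
      simpa [smul_eq_mul] using this
    linarith
  -- final assembly
  unfold WeakMaj
  intro k hk
  rw [hfxe, hfye]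
  set g : Fin m → ℝ := fun j => f fun i => lam i j with hg
  set h : Fin m → ℝ := fun j => f fun i => mu i j with hh
  have hinj : Function.Injective (fun i : Fin m => Tuple.sort g (Fin.rev i)) :=
    (Tuple.sort g).injective.comp Fin.rev_injective
  set T := (Finset.univ.filter fun i : Fin m => (i : ℕ) < k).image
    (fun i => Tuple.sort g (Fin.rev i)) with hT
  have hTcard : T.card = k := by
    rw [hT, Finset.card_image_of_injective _ hinj, card_filter_lt hk]
  have hA : ∑ i ∈ Finset.univ.filter (fun i : Fin m => (i : ℕ) < k), sortedDesc g i
      = ∑ j ∈ T, g j := by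
    rw [hT, Finset.sum_image (fun a _ b _ hab => hinj hab)]
    rfl
  set d : Fin m → ℝ := fun l => ∑ j ∈ T, c j l with hd
  have hd0 : ∀ l, 0 ≤ d l := fun l => Finset.sum_nonneg fun j _ => hc0 j l
  have hd1 : ∀ l, d l ≤ 1 := by
    intro l
    calc d l ≤ ∑ j, c j l := Finset.sum_le_sum_of_subset_of_nonneg (Finset.subset_univ T)
          (fun j _ _ => hc0 j l)
      _ = 1 := hcol l
  have hdsum : ∑ l, d l = (k : ℝ) := by
    rw [hd]
    rw [Finset.sum_comm]
    calc ∑ j ∈ T, ∑ l, c j l = ∑ j ∈ T, (1 : ℝ) :=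
          Finset.sum_congr rfl (fun j _ => hrow j)
      _ = (k : ℝ) := by rw [Finset.sum_const, hTcard]; simp
  calc ∑ i ∈ Finset.univ.filter (fun i : Fin m => (i : ℕ) < k), sortedDesc g i
      = ∑ j ∈ T, g j := hA
    _ ≤ ∑ j ∈ T, ∑ l, c j l * h l := Finset.sum_le_sum fun j _ => perj j
    _ = ∑ l, d l * h l := by
        rw [Finset.sum_comm]
        exact Finset.sum_congr rfl fun l _ => by rw [hd, Finset.sum_mul]
    _ ≤ ∑ i ∈ Finset.univ.filter (fun i : Fin m => (i : ℕ) < k), sortedDesc h i :=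
        sum_weighted_le_topk hk h d hd0 hd1 hdsum
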